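/- For every n ≥ 1 and 0 ≤ k ≤ n, the 3-element ai-semiring S_7 satisfies the inequality x₁x₂⋯xₙxₙ₊₁ ≤ x₁x₂⋯xₙ + Σ_{i=1}^{k} xᵢxₙ₊₁ + Σ_{i=k+1}^{n} xᵢxₙ₊₁yᵢ, where u ≤ v means u + v = v. -/

import Mathlib

/-!
Call `P = s₁⋯sₙ` and let `R` be the right-hand side. A sum in `S_7` is `∞` unless all its
summands coincide, so either `R = ∞` and there is nothing to prove, or every summand
`sᵢ t yᵢ` (with `yᵢ = 1` for `i ≤ k`) equals `P` and `R = P`. In the latter case the claim is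
`P t + P = P`, trivial for `t = 1`. For `t ≠ 1` the summands are `≠ 1`, so `P ≠ 1`; and
`P = a` would force some `sⱼ = a`, whose summand `a t yⱼ` is `∞`. Hence `P = ∞ = P t`.
-/

/-- Addition of S_7: x + x = x and x + y = ∞ for x ≠ y; encoding: 0 = 1, 1 = a, 2 = ∞. -/
def add7 (x y : Fin 3) : Fin 3 := if x = y then x else 2

/-- Multiplication table of S_7; encoding: 0 = 1, 1 = a, 2 = ∞.
Note 0 (the element 1) is a multiplicative identity. -/
def mul7 (x y : Fin 3) : Fin 3 :=
  ![![0, 1, 2],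
    ![1, 2, 2],
    ![2, 2, 2]] x y

lemma add7_two : ∀ x : Fin 3, add7 x 2 = 2 := by decide

lemma add7_self (x : Fin 3) : add7 x x = x := if_pos rfl

lemma foldr_add7 (L : List (Fin 3)) (b : Fin 3) :
    L.foldr add7 b = if ∀ x ∈ L, x = b then b else 2 := by
  induction L with
  | nil => simp
  | cons a l ih =>
    rw [List.foldr_cons, ih]
    split_ifs with hl hal hal <;> simp only [List.forall_mem_cons] at hal
    · rw [hal.1, add7_self]
    · exact if_neg fun ha => hal ⟨ha, hl⟩
    · exact absurd hal.2 hl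
    · exact add7_two a

lemma mul7_zero_right : ∀ x : Fin 3, mul7 x 0 = x := by decide

lemma mul7_two_left : ∀ x : Fin 3, mul7 2 x = 2 := by decide

lemma mul7_one_left_of_ne_zero : ∀ x : Fin 3, x ≠ 0 → mul7 1 x = 2 := by decide

lemma mul7_eq_zero_iff : ∀ x y : Fin 3, mul7 x y = 0 ↔ x = 0 ∧ y = 0 := by decide

lemma mul7_eq_one : ∀ x y : Fin 3, mul7 x y = 1 → x = 1 ∨ y = 1 := by decide

lemma one_mem_of_foldr_mul7_eq_one (L : List (Fin 3)) (h : L.foldr mul7 0 = 1) : 1 ∈ L := by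
  induction L with
  | nil => simp at h
  | cons a l ih =>
    rcases mul7_eq_one _ _ h with rfl | hl
    · exact List.mem_cons_self
    · exact List.mem_cons_of_mem _ (ih hl)

lemma mul7_foldr_mul7_eq_self_or_eq_two {n : ℕ} (hn : n ≠ 0) (s z : Fin n → Fin 3)
    (t : Fin 3) (h : ∀ i, mul7 (mul7 (s i) t) (z i) = (List.ofFn s).foldr mul7 0) :
    mul7 ((List.ofFn s).foldr mul7 0) t = (List.ofFn s).foldr mul7 0 ∨
      (List.ofFn s).foldr mul7 0 = 2 := by
  set P := (List.ofFn s).foldr mul7 0 with hP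
  rcases eq_or_ne t 0 with rfl | ht
  · exact Or.inl (mul7_zero_right P)
  refine Or.inr (by_contra fun hP2 => ?_)
  have hP0 : P ≠ 0 := fun hP0 =>
    ht ((mul7_eq_zero_iff _ _).1 ((mul7_eq_zero_iff _ _).1 ((h ⟨0, by omega⟩).trans hP0)).1).2
  have hP1 : P = 1 := by omega
  obtain ⟨j, hj⟩ := List.mem_ofFn.1 (one_mem_of_foldr_mul7_eq_one _ hP1)
  have hPj := h j
  rw [hj, mul7_one_left_of_ne_zero t ht, mul7_two_left] at hPj
  exact hP2 hPj.symm

lemma add7_mul7_foldr_mul7_le {n : ℕ} (hn : n ≠ 0) (s z : Fin n → Fin 3) (t : Fin 3) :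
    add7 (mul7 ((List.ofFn s).foldr mul7 0) t)
      ((List.ofFn fun i => mul7 (mul7 (s i) t) (z i)).foldr add7 ((List.ofFn s).foldr mul7 0))
    = (List.ofFn fun i => mul7 (mul7 (s i) t) (z i)).foldr add7
        ((List.ofFn s).foldr mul7 0) := by
  rw [foldr_add7]
  split_ifs with hall
  · rcases mul7_foldr_mul7_eq_self_or_eq_two hn s z t (List.forall_mem_ofFn_iff.1 hall)
      with hself | htwo
    · rw [hself, add7_self]
    · rw [htwo, add7_two]
  · exact add7_two _

/-- For every n ≥ 1 and 0 ≤ k ≤ n, S_7 satisfies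
x₁⋯xₙxₙ₊₁ ≤ x₁⋯xₙ + Σ_{i=1}^{k} xᵢxₙ₊₁ + Σ_{i=k+1}^{n} xᵢxₙ₊₁yᵢ,
where u ≤ v means u + v = v. -/
theorem stmt19 : ∀ n : ℕ, 1 ≤ n → ∀ k : ℕ, k ≤ n →
    ∀ (s : Fin n → Fin 3) (t : Fin 3) (ys : Fin n → Fin 3),
    add7 (mul7 ((List.ofFn s).foldr mul7 0) t)
      ((List.ofFn (fun i : Fin n =>
          if (i : ℕ) < k then mul7 (s i) t else mul7 (mul7 (s i) t) (ys i))).foldr add7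
        ((List.ofFn s).foldr mul7 0))
    = (List.ofFn (fun i : Fin n =>
          if (i : ℕ) < k then mul7 (s i) t else mul7 (mul7 (s i) t) (ys i))).foldr add7
        ((List.ofFn s).foldr mul7 0) := by
  intro n hn k _ s t ys
  have hterms : (fun i : Fin n =>
      if (i : ℕ) < k then mul7 (s i) t else mul7 (mul7 (s i) t) (ys i)) =
      fun i => mul7 (mul7 (s i) t) (if (i : ℕ) < k then 0 else ys i) := by
    funext i
    split_ifs
    · rw [mul7_zero_right]
    · rfl
  rw [hterms]
  exact add7_mul7_foldr_mul7_le (by omega) s _ t
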